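/- arXiv:1312.0624 — 4 statements merged into one kernel-verified Lean document; each statement's English description precedes it below -/
import Mathlib

section
/- Let f be a real-valued function on d×d real matrices that is bounded below by f_min, let L > 0, and let (U_t)_{t≥0} be a sequence of orthogonal matrices with U_{t+1} = U_t·G(i_t, j_t, θ_t), where for each t, 1 ≤ i_t < j_t ≤ d, the function g_t(θ) := f(U_t·G(i_t,j_t,θ)) is differentiable with L-Lipschitz derivative and periodic with period 2π, and θ_t minimizes g_t over ℝ. Then for every T ≥ 0, Σ_{t=0}^{T} g_t′(0)² ≤ 2L·(f(U_0) − f_min). -/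
open Matrix

/-- The Givens rotation `G(i,j,θ)`. -/
noncomputable def givens (d : ℕ) (i j : Fin d) (θ : ℝ) : Matrix (Fin d) (Fin d) ℝ :=
  fun a b =>
    if a = i ∧ b = i then Real.cos θ
    else if a = j ∧ b = j then Real.cos θ
    else if a = i ∧ b = j then Real.sin θ
    else if a = j ∧ b = i then -Real.sin θ
    else if a = b then 1 else 0

lemma givens_zero {d : ℕ} {i j : Fin d} (hij : i ≠ j) : givens d i j 0 = 1 := by
  funext a b
  simp only [givens, Real.cos_zero, Real.sin_zero, neg_zero, Matrix.one_apply]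
  split_ifs <;> simp_all <;> aesop

lemma quad_upper {g : ℝ → ℝ} {L : ℝ} (hL : 0 < L) (hd : Differentiable ℝ g)
    (hlip : ∀ x y : ℝ, |deriv g x - deriv g y| ≤ L * |x - y|) (x y : ℝ) :
    g y ≤ g x + deriv g x * (y - x) + L / 2 * (y - x) ^ 2 := by
  have hcont : Continuous (deriv g) := by
    have : LipschitzWith (Real.toNNReal L) (deriv g) := by
      apply LipschitzWith.of_dist_le_mul
      intro a b
      simpa [Real.dist_eq, Real.coe_toNNReal _ hL.le] using hlip a b
    exact this.continuous
  have hφd : ∀ t : ℝ, HasDerivAt (fun t => g (x + t * (y - x)))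
      (deriv g (x + t * (y - x)) * (y - x)) t := by
    intro t
    have h1 : HasDerivAt (fun t : ℝ => x + t * (y - x)) (y - x) t := by
      simpa using ((hasDerivAt_id t).mul_const (y - x)).const_add x
    exact ((hd (x + t * (y - x))).hasDerivAt).comp t h1
  have hint : g y - g x = ∫ t in (0:ℝ)..1, deriv g (x + t * (y - x)) * (y - x) := by
    have := intervalIntegral.integral_eq_sub_of_hasDerivAt
      (f := fun t => g (x + t * (y - x)))
      (fun t _ => hφd t)
      (((hcont.comp (by continuity)).mul continuous_const).intervalIntegrable 0 1)
    rw [intervalIntegral.integral_mul_const]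
    rw [intervalIntegral.integral_mul_const] at this
    simpa using this.symm
  have hbound : ∫ t in (0:ℝ)..1, deriv g (x + t * (y - x)) * (y - x)
      ≤ ∫ t in (0:ℝ)..1, (deriv g x * (y - x) + L * t * (y - x) ^ 2) := by
    apply intervalIntegral.integral_mono_on zero_le_one
    · exact ((hcont.comp (by continuity)).mul continuous_const).intervalIntegrable 0 1
    · exact (by continuity : Continuous fun t : ℝ => deriv g x * (y - x) + L * t * (y - x) ^ 2).intervalIntegrable 0 1
    · intro t ht
      have h1 : deriv g (x + t * (y - x)) * (y - x) - deriv g x * (y - x)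
          ≤ L * t * (y - x) ^ 2 := by
        have h2 : |deriv g (x + t * (y - x)) - deriv g x| ≤ L * (t * |y - x|) := by
          have := hlip (x + t * (y - x)) x
          simpa [abs_mul, abs_of_nonneg ht.1, mul_assoc] using this
        calc deriv g (x + t * (y - x)) * (y - x) - deriv g x * (y - x)
            = (deriv g (x + t * (y - x)) - deriv g x) * (y - x) := by ring
          _ ≤ |(deriv g (x + t * (y - x)) - deriv g x) * (y - x)| := le_abs_self _
          _ = |deriv g (x + t * (y - x)) - deriv g x| * |y - x| := abs_mul _ _
          _ ≤ L * (t * |y - x|) * |y - x| := by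
              exact mul_le_mul_of_nonneg_right h2 (abs_nonneg _)
          _ = L * t * |y - x| ^ 2 := by ring
          _ = L * t * (y - x) ^ 2 := by rw [sq_abs]
      linarith
  have hval : ∫ t in (0:ℝ)..1, (deriv g x * (y - x) + L * t * (y - x) ^ 2)
      = deriv g x * (y - x) + L / 2 * (y - x) ^ 2 := by
    rw [intervalIntegral.integral_add (intervalIntegrable_const)
      (by exact (by continuity : Continuous fun t : ℝ => L * t * (y - x) ^ 2).intervalIntegrable 0 1)]
    have h2 : ∫ t in (0:ℝ)..1, L * t * (y - x) ^ 2 = L * (y - x)^2 * ∫ t in (0:ℝ)..1, t := by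
      rw [← intervalIntegral.integral_const_mul]
      congr 1; funext t; ring
    rw [h2, integral_id, intervalIntegral.integral_const]
    simp
    ring
  linarith [hint ▸ hbound, hval ▸ hbound]

/-- along the Givens coordinate-minimization iterates
`U_{t+1} = U_t · G(i_t, j_t, θ_t)`, where `θ_t` exactly minimizes
`g_t(θ) = f (U_t · G(i_t,j_t,θ))` and each `g_t` is differentiable,
`2π`-periodic, with `L`-Lipschitz derivative, the telescoping bound
`Σ_{t=0}^{T} g_t′(0)² ≤ 2L (f U_0 − f_min)` holds. -/
theorem givens_descent_telescoping_bound {d : ℕ}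
    (f : Matrix (Fin d) (Fin d) ℝ → ℝ) (fmin : ℝ) (hfmin : ∀ A, fmin ≤ f A)
    (L : ℝ) (hL : 0 < L)
    (U : ℕ → Matrix (Fin d) (Fin d) ℝ)
    (i j : ℕ → Fin d) (θs : ℕ → ℝ)
    (g : ℕ → ℝ → ℝ)
    (hg : ∀ t θ, g t θ = f (U t * givens d (i t) (j t) θ))
    (horth : ∀ t, (U t)ᵀ * U t = 1 ∧ U t * (U t)ᵀ = 1)
    (hij : ∀ t, i t < j t)
    (hrec : ∀ t, U (t + 1) = U t * givens d (i t) (j t) (θs t))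
    (hdiff : ∀ t, Differentiable ℝ (g t))
    (hper : ∀ t, Function.Periodic (g t) (2 * Real.pi))
    (hlip : ∀ t, ∀ x y : ℝ, |deriv (g t) x - deriv (g t) y| ≤ L * |x - y|)
    (hopt : ∀ t θ, g t (θs t) ≤ g t θ)
    (T : ℕ) :
    ∑ t ∈ Finset.range (T + 1), (deriv (g t) 0) ^ 2 ≤ 2 * L * (f (U 0) - fmin) := by
  have key : ∀ t, (deriv (g t) 0) ^ 2 ≤ 2 * L * (f (U t) - f (U (t + 1))) := by
    intro t
    have hU0 : g t 0 = f (U t) := by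
      rw [hg, givens_zero (hij t).ne, mul_one]
    have hU1 : g t (θs t) = f (U (t + 1)) := by rw [hg, ← hrec]
    set D := deriv (g t) 0 with hD
    have h1 : g t (-(D / L)) ≤ g t 0 + D * (-(D / L) - 0) + L / 2 * (-(D / L) - 0) ^ 2 :=
      quad_upper hL (hdiff t) (hlip t) 0 (-(D / L))
    have h2 : g t (θs t) ≤ g t (-(D / L)) := hopt t _
    have h3 : D * (-(D / L) - 0) + L / 2 * (-(D / L) - 0) ^ 2 = -(D ^ 2 / (2 * L)) := by
      field_simp
      ring
    have h4 : g t (θs t) ≤ g t 0 - D ^ 2 / (2 * L) := by linarith [h1, h2, h3]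
    rw [hU0, hU1] at h4
    have h5 : D ^ 2 / (2 * L) ≤ f (U t) - f (U (t + 1)) := by linarith
    calc D ^ 2 = 2 * L * (D ^ 2 / (2 * L)) := by field_simp
      _ ≤ 2 * L * (f (U t) - f (U (t + 1))) := by
          apply mul_le_mul_of_nonneg_left h5 (by positivity)
  calc ∑ t ∈ Finset.range (T + 1), (deriv (g t) 0) ^ 2
      ≤ ∑ t ∈ Finset.range (T + 1), 2 * L * (f (U t) - f (U (t + 1))) :=
        Finset.sum_le_sum fun t _ => key t
    _ = 2 * L * ∑ t ∈ Finset.range (T + 1), (f (U t) - f (U (t + 1))) := by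
        rw [Finset.mul_sum]
    _ = 2 * L * (f (U 0) - f (U (T + 1))) := by
        rw [Finset.sum_range_sub' (fun t => f (U t))]
    _ ≤ 2 * L * (f (U 0) - fmin) := by
        have := hfmin (U (T + 1))
        nlinarith
end

section
/- Let T ∈ ℝ^{d×d×d} be orthogonally decomposable: T = Σ_{i=1}^d λ_i (v_i ⊗ v_i ⊗ v_i) for an orthonormal basis v_1, …, v_d of ℝ^d and scalars λ_i > 0. Then for every orthogonal d×d matrix U with columns u_1, …, u_d, Σ_{i=1}^d T(u_i, u_i, u_i) ≤ Σ_{i=1}^d λ_i, and equality is attained by the orthogonal matrix U whose columns are v_1, …, v_d. Hence the maximum of Σ_{i=1}^d T(u_i,u_i,u_i) over orthogonal U equals Σ_{i=1}^d λ_i. -/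
open Matrix

/-- A third-order tensor `T` acting as a trilinear map:
`T(v₁,v₂,v₃) = Σ_{a,b,c} T_{abc} (v₁)_a (v₂)_b (v₃)_c`. -/
def tmap {d : ℕ} (T : Fin d → Fin d → Fin d → ℝ) (v₁ v₂ v₃ : Fin d → ℝ) : ℝ :=
  ∑ a, ∑ b, ∑ c, T a b c * v₁ a * v₂ b * v₃ c

theorem tmap_expand {d : ℕ} (lam : Fin d → ℝ) (v : Fin d → Fin d → ℝ) (u : Fin d → ℝ) :
    ∑ a, ∑ b, ∑ c, (∑ i, lam i * v i a * v i b * v i c) * u a * u b * u c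
      = ∑ i, lam i * (∑ a, v i a * u a)^3 := by
  have h : ∀ i : Fin d, lam i * (∑ a, v i a * u a)^3
      = ∑ a, ∑ b, ∑ c, lam i * v i a * v i b * v i c * u a * u b * u c := by
    intro i
    have e1 : lam i * (∑ a, v i a * u a)^3
        = ∑ a, (v i a * u a) * (lam i * (∑ b, v i b * u b) * (∑ c, v i c * u c)) := by
      rw [← Finset.sum_mul]; ring
    rw [e1]
    refine Finset.sum_congr rfl fun a _ => ?_
    have e2 : (v i a * u a) * (lam i * (∑ b, v i b * u b) * (∑ c, v i c * u c))
        = ∑ b, (v i b * u b) * (v i a * u a * lam i * (∑ c, v i c * u c)) := by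
      rw [← Finset.sum_mul]; ring
    rw [e2]
    refine Finset.sum_congr rfl fun b _ => ?_
    have e3 : (v i b * u b) * (v i a * u a * lam i * (∑ c, v i c * u c))
        = ∑ c, (v i c * u c) * (v i b * u b * (v i a * u a * lam i)) := by
      rw [← Finset.sum_mul]; ring
    rw [e3]
    exact Finset.sum_congr rfl fun c _ => by ring
  simp only [h, Finset.sum_mul]
  calc ∑ a, ∑ b, ∑ c, ∑ i, lam i * v i a * v i b * v i c * u a * u b * u c
      = ∑ a, ∑ b, ∑ i, ∑ c, lam i * v i a * v i b * v i c * u a * u b * u c :=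
        Finset.sum_congr rfl fun a _ => Finset.sum_congr rfl fun b _ => Finset.sum_comm
    _ = ∑ a, ∑ i, ∑ b, ∑ c, lam i * v i a * v i b * v i c * u a * u b * u c :=
        Finset.sum_congr rfl fun a _ => Finset.sum_comm
    _ = ∑ i, ∑ a, ∑ b, ∑ c, lam i * v i a * v i b * v i c * u a * u b * u c :=
        Finset.sum_comm

theorem tmap_eq {d : ℕ} (T : Fin d → Fin d → Fin d → ℝ) (lam : Fin d → ℝ)
    (v : Fin d → Fin d → ℝ)
    (hT : ∀ a b c, T a b c = ∑ i, lam i * v i a * v i b * v i c) (u : Fin d → ℝ) :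
    tmap T u u u = ∑ i, lam i * (∑ a, v i a * u a)^3 := by
  simp only [tmap, hT]
  exact tmap_expand lam v u

theorem bound {d : ℕ} (T : Fin d → Fin d → Fin d → ℝ) (lam : Fin d → ℝ)
    (v : Fin d → Fin d → ℝ) (hlam : ∀ i, 0 < lam i)
    (horthonormal : ∀ i j, (∑ a, v i a * v j a) = if i = j then (1 : ℝ) else 0)
    (hT : ∀ a b c, T a b c = ∑ i, lam i * v i a * v i b * v i c)
    (U : Matrix (Fin d) (Fin d) ℝ) (hU : Uᵀ * U = 1 ∧ U * Uᵀ = 1) :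
    ∑ i, tmap T (fun a => U a i) (fun a => U a i) (fun a => U a i) ≤ ∑ i, lam i := by
  have hUU : ∀ a b, (∑ j, U a j * U b j) = if a = b then (1:ℝ) else 0 := by
    intro a b
    have := congrFun (congrFun hU.2 a) b
    simpa [Matrix.mul_apply, Matrix.one_apply] using this
  set c : Fin d → Fin d → ℝ := fun i j => ∑ a, v i a * U a j with hc
  have hrow : ∀ i, ∑ j, (c i j)^2 = 1 := by
    intro i
    have e : ∀ j : Fin d, (c i j)^2 = ∑ a, ∑ b, (v i a * v i b) * (U a j * U b j) := by
      intro j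
      rw [pow_two, hc]
      rw [Finset.sum_mul]
      refine Finset.sum_congr rfl fun a _ => ?_
      have e2 : (v i a * U a j) * (∑ b, v i b * U b j)
          = ∑ b, (v i b * U b j) * (v i a * U a j) := by
        rw [← Finset.sum_mul]; ring
      rw [e2]
      exact Finset.sum_congr rfl fun b _ => by ring
    simp only [e]
    rw [Finset.sum_comm]
    have e3 : ∀ a : Fin d, (∑ j, ∑ b, (v i a * v i b) * (U a j * U b j))
        = ∑ b, (v i a * v i b) * (∑ j, U a j * U b j) := by
      intro a
      rw [Finset.sum_comm]
      refine Finset.sum_congr rfl fun b _ => ?_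
      rw [Finset.mul_sum]
    simp only [e3, hUU, mul_ite, mul_one, mul_zero, Finset.sum_ite_eq,
      Finset.mem_univ, if_true]
    simpa using horthonormal i i
  have hexp : ∀ j, tmap T (fun a => U a j) (fun a => U a j) (fun a => U a j)
      = ∑ i, lam i * (c i j)^3 := fun j => tmap_eq T lam v hT _
  simp only [hexp]
  rw [Finset.sum_comm]
  refine Finset.sum_le_sum fun i _ => ?_
  have hle1 : ∀ j, c i j ≤ 1 := by
    intro j
    have h2 : (c i j)^2 ≤ 1 := by
      rw [← hrow i]
      exact Finset.single_le_sum (fun k _ => sq_nonneg (c i k)) (Finset.mem_univ j)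
    nlinarith [sq_nonneg (c i j - 1)]
  calc ∑ j, lam i * (c i j)^3 ≤ ∑ j, lam i * (c i j)^2 := by
        refine Finset.sum_le_sum fun j _ => ?_
        have : (c i j)^3 ≤ (c i j)^2 := by nlinarith [sq_nonneg (c i j), hle1 j]
        exact mul_le_mul_of_nonneg_left this (hlam i).le
    _ = lam i := by rw [← Finset.mul_sum, hrow i, mul_one]

/-- if `T = Σ_i λ_i v_i ⊗ v_i ⊗ v_i` with `v_1,…,v_d` an
orthonormal basis of `ℝ^d` and `λ_i > 0`, then for every orthogonal `U` with
columns `u_i`, `Σ_i T(u_i,u_i,u_i) ≤ Σ_i λ_i`, and equality is attained by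
the orthogonal matrix whose columns are the `v_i`; hence the maximum over
orthogonal matrices equals `Σ_i λ_i`. -/
theorem tensor_decomposition_max {d : ℕ}
    (T : Fin d → Fin d → Fin d → ℝ)
    (v : Fin d → Fin d → ℝ) (lam : Fin d → ℝ) (hlam : ∀ i, 0 < lam i)
    (horthonormal : ∀ i j, (∑ a, v i a * v j a) = if i = j then (1 : ℝ) else 0)
    (hT : ∀ a b c, T a b c = ∑ i, lam i * v i a * v i b * v i c) :
    (∀ U : Matrix (Fin d) (Fin d) ℝ, Uᵀ * U = 1 ∧ U * Uᵀ = 1 →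
      ∑ i, tmap T (fun a => U a i) (fun a => U a i) (fun a => U a i) ≤ ∑ i, lam i) ∧
    ((Matrix.of fun a i => v i a)ᵀ * (Matrix.of fun a i => v i a) = 1 ∧
      (Matrix.of fun a i => v i a) * (Matrix.of fun a i => v i a)ᵀ = 1) ∧
    (∑ i, tmap T (v i) (v i) (v i) = ∑ i, lam i) ∧
    IsGreatest {x : ℝ | ∃ U : Matrix (Fin d) (Fin d) ℝ,
        (Uᵀ * U = 1 ∧ U * Uᵀ = 1) ∧
        x = ∑ i, tmap T (fun a => U a i) (fun a => U a i) (fun a => U a i)}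
      (∑ i, lam i) := by
  have hVtV : (Matrix.of fun a i => v i a)ᵀ * (Matrix.of fun a i => v i a) = 1 := by
    ext i j
    simp only [Matrix.mul_apply, Matrix.transpose_apply, Matrix.of_apply, Matrix.one_apply]
    exact horthonormal i j
  have hVVt : (Matrix.of fun a i => v i a) * (Matrix.of fun a i => v i a)ᵀ = 1 :=
    mul_eq_one_comm.mp hVtV
  have heq : ∑ i, tmap T (v i) (v i) (v i) = ∑ i, lam i := by
    refine Finset.sum_congr rfl fun i _ => ?_
    rw [tmap_eq T lam v hT (v i)]
    have : ∀ j : Fin d, lam j * (∑ a, v j a * v i a)^3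
        = if j = i then lam j else 0 := by
      intro j
      rw [horthonormal j i]
      split <;> simp
    simp only [this, Finset.sum_ite_eq', Finset.mem_univ, if_true]
  refine ⟨fun U hU => bound T lam v hlam horthonormal hT U hU, ⟨hVtV, hVVt⟩, heq, ?_, ?_⟩
  · exact ⟨Matrix.of fun a i => v i a, ⟨hVtV, hVVt⟩, heq.symm⟩
  · rintro x ⟨U, hU, rfl⟩
    exact bound T lam v hlam horthonormal hT U hU
end

section
/- Let T ∈ ℝ^{d×d×d} be orthogonally decomposable: T = Σ_{i=1}^d λ_i (v_i ⊗ v_i ⊗ v_i) for an orthonormal basis v_1, …, v_d of ℝ^d and scalars λ_i > 0. An orthogonal d×d matrix U with columns u_1, …, u_d satisfies Σ_{i=1}^d T(u_i, u_i, u_i) = Σ_{i=1}^d λ_i if and only if there exists a permutation π of {1, …, d} such that u_i = v_{π(i)} for all i. -/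
open Matrix

/-- Expansion of `tmap` for an odeco tensor. -/
theorem tmap_odeco {d : ℕ} (T : Fin d → Fin d → Fin d → ℝ) (v : Fin d → Fin d → ℝ)
    (lam : Fin d → ℝ)
    (hT : ∀ a b c, T a b c = ∑ i, lam i * v i a * v i b * v i c)
    (u : Fin d → ℝ) :
    tmap T u u u = ∑ i, lam i * (∑ a, v i a * u a)^3 := by
  have comm4 : ∀ f : Fin d → Fin d → Fin d → Fin d → ℝ,
      ∑ a, ∑ b, ∑ c, ∑ i, f a b c i = ∑ i, ∑ a, ∑ b, ∑ c, f a b c i := by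
    intro f
    calc ∑ a, ∑ b, ∑ c, ∑ i, f a b c i
        = ∑ a, ∑ b, ∑ i, ∑ c, f a b c i :=
          Finset.sum_congr rfl fun a _ => Finset.sum_congr rfl fun b _ => Finset.sum_comm
      _ = ∑ a, ∑ i, ∑ b, ∑ c, f a b c i :=
          Finset.sum_congr rfl fun a _ => Finset.sum_comm
      _ = ∑ i, ∑ a, ∑ b, ∑ c, f a b c i := Finset.sum_comm
  have cube : ∀ s : Fin d → ℝ, (∑ a, s a)^3 = ∑ a, ∑ b, ∑ c, s a * s b * s c := by
    intro s
    simp only [pow_succ, pow_zero, one_mul, Finset.sum_mul, Finset.mul_sum]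
    exact Finset.sum_congr rfl fun a _ => Finset.sum_congr rfl fun b _ =>
      Finset.sum_congr rfl fun c _ => by ring
  unfold tmap
  simp only [hT, Finset.sum_mul, cube, Finset.mul_sum]
  rw [comm4]
  exact Finset.sum_congr rfl fun i _ => Finset.sum_congr rfl fun a _ =>
    Finset.sum_congr rfl fun b _ => Finset.sum_congr rfl fun c _ => by ring

/-- if `T = Σ_i λ_i v_i ⊗ v_i ⊗ v_i` with `v_1,…,v_d` an
orthonormal basis of `ℝ^d` and `λ_i > 0`, then an orthogonal matrix `U` with
columns `u_i` satisfies `Σ_i T(u_i,u_i,u_i) = Σ_i λ_i` if and only if there is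
a permutation `π` of `{1,…,d}` with `u_i = v_{π(i)}` for all `i`. -/
theorem tensor_decomposition_max_iff_perm {d : ℕ}
    (T : Fin d → Fin d → Fin d → ℝ)
    (v : Fin d → Fin d → ℝ) (lam : Fin d → ℝ) (hlam : ∀ i, 0 < lam i)
    (horthonormal : ∀ i j, (∑ a, v i a * v j a) = if i = j then (1 : ℝ) else 0)
    (hT : ∀ a b c, T a b c = ∑ i, lam i * v i a * v i b * v i c)
    (U : Matrix (Fin d) (Fin d) ℝ) (hU : Uᵀ * U = 1 ∧ U * Uᵀ = 1) :
    (∑ i, tmap T (fun a => U a i) (fun a => U a i) (fun a => U a i) = ∑ i, lam i) ↔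
      ∃ π : Equiv.Perm (Fin d), ∀ i, (fun a => U a i) = v (π i) := by
  -- The matrix V with rows the v i, and W = V * U.
  set V : Matrix (Fin d) (Fin d) ℝ := Matrix.of v with hV
  have hVVt : V * Vᵀ = 1 := by
    ext i j
    simp only [Matrix.mul_apply, Matrix.transpose_apply, Matrix.one_apply, hV, Matrix.of_apply]
    exact horthonormal i j
  have hVtV : Vᵀ * V = 1 := mul_eq_one_comm.mp hVVt
  set W : Matrix (Fin d) (Fin d) ℝ := V * U with hW
  have hVtVU : Vᵀ * (V * U) = U := by
    rw [← Matrix.mul_assoc, hVtV, Matrix.one_mul]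
  have hWtW : Wᵀ * W = 1 := by
    rw [hW, Matrix.transpose_mul, Matrix.mul_assoc, hVtVU, hU.1]
  have hWWt : W * Wᵀ = 1 := mul_eq_one_comm.mp hWtW
  have hWapp : ∀ i j, W i j = ∑ a, v i a * U a j := by
    intro i j; simp [hW, Matrix.mul_apply, hV]
  -- rows of W are unit vectors
  have hrow : ∀ i, ∑ j, (W i j)^2 = 1 := by
    intro i
    have := congrFun (congrFun hWWt i) i
    simpa [Matrix.mul_apply, Matrix.one_apply, pow_two] using this
  have hcol : ∀ j k, ∑ i, W i j * W i k = if j = k then (1:ℝ) else 0 := by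
    intro j k
    have := congrFun (congrFun hWtW j) k
    simpa [Matrix.mul_apply, Matrix.one_apply] using this
  -- the main tmap expansion for each column
  have key : ∀ j, tmap T (fun a => U a j) (fun a => U a j) (fun a => U a j)
      = ∑ i, lam i * (W i j)^3 := by
    intro j
    rw [tmap_odeco T v lam hT]
    exact Finset.sum_congr rfl fun i _ => by rw [hWapp]
  have hsum : (∑ j, tmap T (fun a => U a j) (fun a => U a j) (fun a => U a j))
      = ∑ i, lam i * ∑ j, (W i j)^3 := by
    simp only [key, Finset.mul_sum]
    exact Finset.sum_comm
  have hcube_le : ∀ i j, (W i j)^3 ≤ (W i j)^2 := by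
    intro i j
    have h1 : (W i j)^2 ≤ 1 := by
      have := hrow i
      have hn : ∀ k ∈ Finset.univ, (0:ℝ) ≤ (W i k)^2 := fun k _ => sq_nonneg _
      calc (W i j)^2 ≤ ∑ k, (W i k)^2 := Finset.single_le_sum hn (Finset.mem_univ j)
        _ = 1 := hrow i
    nlinarith [sq_nonneg (W i j), sq_nonneg (W i j - 1), sq_nonneg (W i j + 1)]
  constructor
  · -- forward direction
    intro heq
    rw [hsum] at heq
    -- each term lam i * ∑ j (W i j)^3 ≤ lam i, with total equality
    have hterm_le : ∀ i ∈ Finset.univ, lam i * ∑ j, (W i j)^3 ≤ lam i := by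
      intro i _
      have h2 : ∑ j, (W i j)^3 ≤ 1 := by
        calc ∑ j, (W i j)^3 ≤ ∑ j, (W i j)^2 :=
              Finset.sum_le_sum fun j _ => hcube_le i j
          _ = 1 := hrow i
      nlinarith [hlam i]
    have hterm_eq : ∀ i ∈ Finset.univ, lam i * ∑ j, (W i j)^3 = lam i :=
      (Finset.sum_eq_sum_iff_of_le hterm_le).mp heq
    have hW01 : ∀ i j, W i j = 0 ∨ W i j = 1 := by
      intro i j
      have h3 : ∑ k, (W i k)^3 = 1 := by
        have h := hterm_eq i (Finset.mem_univ i)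
        exact mul_left_cancel₀ (hlam i).ne' (by rw [h, mul_one])
      have h4 : ∑ k, (W i k)^3 = ∑ k, (W i k)^2 := by rw [h3, hrow i]
      have h5 := (Finset.sum_eq_sum_iff_of_le
        (fun k (_ : k ∈ Finset.univ) => hcube_le i k)).mp h4 j (Finset.mem_univ j)
      -- (W i j)^2 = (W i j)^3
      have h6 : (W i j)^2 * (W i j - 1) = 0 := by nlinarith [h5]
      rcases mul_eq_zero.mp h6 with h | h
      · left; exact pow_eq_zero_iff (by norm_num) |>.mp h
      · right; linarith
    -- uniqueness in each column
    have huniq : ∀ j i₁ i₂, W i₁ j = 1 → W i₂ j = 1 → i₁ = i₂ := by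
      intro j i₁ i₂ h1 h2
      by_contra hne
      have hsub : ({i₁, i₂} : Finset (Fin d)) ⊆ Finset.univ := Finset.subset_univ _
      have h7 : ∑ i ∈ ({i₁, i₂} : Finset (Fin d)), W i j * W i j ≤ ∑ i, W i j * W i j :=
        Finset.sum_le_sum_of_subset_of_nonneg hsub
          (fun i _ _ => mul_self_nonneg _)
      rw [Finset.sum_pair hne, h1, h2] at h7
      have h8 : ∑ i, W i j * W i j = 1 := by simpa using hcol j j
      linarith
    have hex : ∀ j, ∃ i, W i j = 1 := by
      intro j
      by_contra hno
      push_neg at hno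
      have hz : ∀ i, W i j = 0 := fun i => (hW01 i j).resolve_right (hno i)
      have h8 : ∑ i, W i j * W i j = 1 := by simpa using hcol j j
      simp [hz] at h8
    choose f hf using hex
    have hinj : Function.Injective f := by
      intro j k hjk
      by_contra hne
      have h9 : ∑ i, W i j * W i k = 0 := by simpa [hne] using hcol j k
      have h10 : W (f j) j * W (f j) k = 1 := by
        rw [hf j, hjk, hf k, one_mul]
      have h11 : ∀ i ∈ Finset.univ, (0:ℝ) ≤ W i j * W i k := by
        intro i _
        rcases hW01 i j with h | h <;> rcases hW01 i k with h' | h' <;>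
          simp [h, h']
      have h12 : W (f j) j * W (f j) k ≤ ∑ i, W i j * W i k :=
        Finset.single_le_sum h11 (Finset.mem_univ _)
      rw [h9, h10] at h12
      linarith
    have hbij : Function.Bijective f := Finite.injective_iff_bijective.mp hinj
    refine ⟨Equiv.ofBijective f hbij, fun j => ?_⟩
    have hWdelta : ∀ i, W i j = if i = f j then (1:ℝ) else 0 := by
      intro i
      by_cases h : i = f j
      · simp [h, hf j]
      · simp only [h, if_false]
        rcases hW01 i j with h' | h'
        · exact h'
        · exact absurd (huniq j i (f j) h' (hf j)) h
    have hUcol : ∀ a, U a j = ∑ i, v i a * W i j := by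
      intro a
      have hVtW : Vᵀ * W = U := by
        rw [hW, ← Matrix.mul_assoc, hVtV, Matrix.one_mul]
      have := congrFun (congrFun hVtW a) j
      simp only [Matrix.mul_apply, Matrix.transpose_apply, hV, Matrix.of_apply] at this
      exact this.symm
    funext a
    show U a j = v (Equiv.ofBijective f hbij j) a
    rw [hUcol a]
    simp only [Equiv.ofBijective_apply, hWdelta]
    simp [Finset.sum_ite_eq']
  · -- reverse direction
    rintro ⟨π, hπ⟩
    have hval : ∀ j, tmap T (fun a => U a j) (fun a => U a j) (fun a => U a j) = lam (π j) := by
      intro j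
      rw [hπ j, tmap_odeco T v lam hT]
      have : ∀ i, lam i * (∑ a, v i a * v (π j) a)^3
          = if i = π j then lam (π j) else 0 := by
        intro i
        rw [horthonormal i (π j)]
        by_cases h : i = π j <;> simp [h]
      simp only [this]
      simp [Finset.sum_ite_eq']
    simp only [hval]
    exact Equiv.sum_comp π lam
end

section
/- Let λ_1, …, λ_d > 0. An orthogonal d×d real matrix U maximizes the function U ↦ Σ_{a=1}^d Σ_{i=1}^d λ_a·(U_{a i})³ over all orthogonal matrices if and only if U is a permutation matrix (i.e. every entry of U is 0 or 1 with exactly one 1 in each row and column), and the maximum value equals Σ_{a=1}^d λ_a. -/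
open Matrix

/-- `U` is a permutation matrix: every entry is 0 or 1, with exactly one 1 in
each row and each column. -/
def IsPermMatrix {d : ℕ} (U : Matrix (Fin d) (Fin d) ℝ) : Prop :=
  (∀ a i, U a i = 0 ∨ U a i = 1) ∧
  (∀ a, ∃! i, U a i = 1) ∧
  (∀ i, ∃! a, U a i = 1)

lemma row_sq {d : ℕ} {W : Matrix (Fin d) (Fin d) ℝ} (h : W * Wᵀ = 1) (a : Fin d) :
    ∑ i, (W a i) ^ 2 = 1 := by
  have := congrFun (congrFun h a) a
  simp [Matrix.mul_apply, Matrix.transpose_apply, Matrix.one_apply] at this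
  simpa [pow_two] using this

lemma col_sq {d : ℕ} {W : Matrix (Fin d) (Fin d) ℝ} (h : Wᵀ * W = 1) (i : Fin d) :
    ∑ a, (W a i) ^ 2 = 1 := by
  have := congrFun (congrFun h i) i
  simp [Matrix.mul_apply, Matrix.transpose_apply, Matrix.one_apply] at this
  simpa [pow_two] using this

lemma cube_le_sq {x : ℝ} (hx : x ^ 2 ≤ 1) : x ^ 3 ≤ x ^ 2 := by
  have h1 : x ≤ 1 := by nlinarith [sq_nonneg (x - 1)]
  nlinarith [mul_nonneg (sq_nonneg x) (sub_nonneg.2 h1)]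

lemma row_cube_le {d : ℕ} {W : Matrix (Fin d) (Fin d) ℝ} (h : W * Wᵀ = 1) (a : Fin d) :
    ∑ i, (W a i) ^ 3 ≤ 1 := by
  have hsq := row_sq h a
  have hle : ∀ i : Fin d, (W a i) ^ 2 ≤ 1 := by
    intro i
    rw [← hsq]
    exact Finset.single_le_sum (f := fun j => (W a j) ^ 2) (fun j _ => sq_nonneg _) (Finset.mem_univ i)
  calc ∑ i, (W a i) ^ 3 ≤ ∑ i, (W a i) ^ 2 :=
        Finset.sum_le_sum (fun i _ => cube_le_sq (hle i))
    _ = 1 := hsq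

lemma obj_le {d : ℕ} (lam : Fin d → ℝ) (hlam : ∀ a, 0 < lam a)
    {W : Matrix (Fin d) (Fin d) ℝ} (h : W * Wᵀ = 1) :
    ∑ a, ∑ i, lam a * (W a i) ^ 3 ≤ ∑ a, lam a := by
  apply Finset.sum_le_sum
  intro a _
  rw [← Finset.mul_sum]
  calc lam a * ∑ i, (W a i) ^ 3 ≤ lam a * 1 :=
        mul_le_mul_of_nonneg_left (row_cube_le h a) (hlam a).le
    _ = lam a := mul_one _

lemma perm_obj {d : ℕ} (lam : Fin d → ℝ) {U : Matrix (Fin d) (Fin d) ℝ}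
    (hP : IsPermMatrix U) :
    ∑ a, ∑ i, lam a * (U a i) ^ 3 = ∑ a, lam a := by
  apply Finset.sum_congr rfl
  intro a _
  obtain ⟨i₀, hi₀, huniq⟩ := hP.2.1 a
  rw [Finset.sum_eq_single i₀]
  · rw [hi₀]; ring
  · intro i _ hne
    rcases hP.1 a i with h0 | h1
    · rw [h0]; ring
    · exact absurd (huniq i h1) hne
  · intro h; exact absurd (Finset.mem_univ i₀) h

/-- Equality case: if objective equals `∑ lam`, then perm matrix. -/
lemma eq_imp_perm {d : ℕ} (lam : Fin d → ℝ) (hlam : ∀ a, 0 < lam a)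
    {W : Matrix (Fin d) (Fin d) ℝ} (hW : Wᵀ * W = 1 ∧ W * Wᵀ = 1)
    (heq : ∑ a, ∑ i, lam a * (W a i) ^ 3 = ∑ a, lam a) :
    IsPermMatrix W := by
  -- each row cube-sum equals 1
  have hrow : ∀ a, ∑ i, (W a i) ^ 3 = 1 := by
    intro a
    by_contra hne
    have hlt : ∑ i, (W a i) ^ 3 < 1 := lt_of_le_of_ne (row_cube_le hW.2 a) hne
    have hstrict : ∑ i, lam a * (W a i) ^ 3 < lam a := by
      rw [← Finset.mul_sum]
      calc lam a * ∑ i, (W a i) ^ 3 < lam a * 1 :=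
            mul_lt_mul_of_pos_left hlt (hlam a)
        _ = lam a := mul_one _
    have hterm_le : ∀ b ∈ Finset.univ, ∑ i, lam b * (W b i) ^ 3 ≤ lam b := by
      intro b _
      rw [← Finset.mul_sum]
      calc lam b * ∑ i, (W b i) ^ 3 ≤ lam b * 1 :=
            mul_le_mul_of_nonneg_left (row_cube_le hW.2 b) (hlam b).le
        _ = lam b := mul_one _
    have : ∑ b, ∑ i, lam b * (W b i) ^ 3 < ∑ b, lam b :=
      Finset.sum_lt_sum hterm_le ⟨a, Finset.mem_univ a, hstrict⟩
    linarith [heq, this]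
  -- entries are 0 or 1
  have h01 : ∀ a i, W a i = 0 ∨ W a i = 1 := by
    intro a i
    have hsq := row_sq hW.2 a
    have hzero : ∑ j, ((W a j) ^ 2 - (W a j) ^ 3) = 0 := by
      rw [Finset.sum_sub_distrib, hsq, hrow a, sub_self]
    have hle : ∀ j : Fin d, (W a j) ^ 2 ≤ 1 := by
      intro j
      rw [← hsq]
      exact Finset.single_le_sum (f := fun k => (W a k) ^ 2) (fun k _ => sq_nonneg _) (Finset.mem_univ j)
    have hnn : ∀ j ∈ Finset.univ, (0:ℝ) ≤ (W a j) ^ 2 - (W a j) ^ 3 :=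
      fun j _ => sub_nonneg.2 (cube_le_sq (hle j))
    have hterm := (Finset.sum_eq_zero_iff_of_nonneg hnn).1 hzero i (Finset.mem_univ i)
    have : (W a i) ^ 2 * (1 - W a i) = 0 := by nlinarith [hterm]
    rcases mul_eq_zero.1 this with h | h
    · left; exact pow_eq_zero_iff (by norm_num) |>.1 h
    · right; linarith
  -- row sums equal 1
  have hrowsum : ∀ a, ∑ i, W a i = 1 := by
    intro a
    have := row_sq hW.2 a
    rw [← this]
    apply Finset.sum_congr rfl
    intro i _
    rcases h01 a i with h | h <;> rw [h] <;> ring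
  have hcolsum : ∀ i, ∑ a, W a i = 1 := by
    intro i
    have := col_sq hW.1 i
    rw [← this]
    apply Finset.sum_congr rfl
    intro a _
    rcases h01 a i with h | h <;> rw [h] <;> ring
  have hnn : ∀ a i, (0:ℝ) ≤ W a i := by
    intro a i; rcases h01 a i with h | h <;> rw [h] <;> norm_num
  refine ⟨h01, ?_, ?_⟩
  · intro a
    have hex : ∃ i, W a i = 1 := by
      by_contra hno
      push_neg at hno
      have : ∑ i, W a i = 0 := Finset.sum_eq_zero (fun i _ => by
        rcases h01 a i with h | h
        · exact h
        · exact absurd h (hno i))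
      rw [hrowsum a] at this; norm_num at this
    obtain ⟨i₀, hi₀⟩ := hex
    refine ⟨i₀, hi₀, ?_⟩
    intro j hj
    by_contra hne
    have h2 : (2:ℝ) ≤ ∑ i, W a i := by
      have := Finset.add_sum_erase Finset.univ (W a) (Finset.mem_univ j)
      rw [← this]
      have hle2 : W a i₀ ≤ ∑ i ∈ Finset.univ.erase j, W a i :=
        Finset.single_le_sum (fun k _ => hnn a k)
          (Finset.mem_erase.2 ⟨fun h => hne h.symm, Finset.mem_univ _⟩)
      rw [hi₀] at hle2
      linarith [hj, hle2]
    rw [hrowsum a] at h2; norm_num at h2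
  · intro i
    have hex : ∃ a, W a i = 1 := by
      by_contra hno
      push_neg at hno
      have : ∑ a, W a i = 0 := Finset.sum_eq_zero (fun a _ => by
        rcases h01 a i with h | h
        · exact h
        · exact absurd h (hno a))
      rw [hcolsum i] at this; norm_num at this
    obtain ⟨a₀, ha₀⟩ := hex
    refine ⟨a₀, ha₀, ?_⟩
    intro b hb
    by_contra hne
    have h2 : (2:ℝ) ≤ ∑ a, W a i := by
      have := Finset.add_sum_erase Finset.univ (fun a => W a i) (Finset.mem_univ b)
      rw [← this]
      have hle2 : W a₀ i ≤ ∑ a ∈ Finset.univ.erase b, W a i :=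
        Finset.single_le_sum (fun k _ => hnn k i)
          (Finset.mem_erase.2 ⟨fun h => hne h.symm, Finset.mem_univ _⟩)
      rw [ha₀] at hle2
      linarith [hb, hle2]
    rw [hcolsum i] at h2; norm_num at h2

/-- for `λ_1,…,λ_d > 0`, an orthogonal matrix `U` maximizes
`Σ_a Σ_i λ_a (U_{a i})³` over orthogonal matrices if and only if `U` is a
permutation matrix, and the maximum value equals `Σ_a λ_a`. -/
theorem cubic_objective_max_iff_perm_matrix {d : ℕ}
    (lam : Fin d → ℝ) (hlam : ∀ a, 0 < lam a)
    (U : Matrix (Fin d) (Fin d) ℝ) (hU : Uᵀ * U = 1 ∧ U * Uᵀ = 1) :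
    ((∀ W : Matrix (Fin d) (Fin d) ℝ, Wᵀ * W = 1 ∧ W * Wᵀ = 1 →
        ∑ a, ∑ i, lam a * (W a i) ^ 3 ≤ ∑ a, ∑ i, lam a * (U a i) ^ 3) ↔
      IsPermMatrix U) ∧
    IsGreatest {x : ℝ | ∃ W : Matrix (Fin d) (Fin d) ℝ,
        (Wᵀ * W = 1 ∧ W * Wᵀ = 1) ∧ x = ∑ a, ∑ i, lam a * (W a i) ^ 3}
      (∑ a, lam a) := by
  have hone : (1 : Matrix (Fin d) (Fin d) ℝ)ᵀ * 1 = 1 ∧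
      (1 : Matrix (Fin d) (Fin d) ℝ) * (1 : Matrix (Fin d) (Fin d) ℝ)ᵀ = 1 := by
    constructor <;> simp
  have honeperm : IsPermMatrix (1 : Matrix (Fin d) (Fin d) ℝ) := by
    refine ⟨?_, ?_, ?_⟩
    · intro a i
      by_cases h : a = i
      · right; simp [Matrix.one_apply, h]
      · left; simp [Matrix.one_apply, h]
    · intro a
      refine ⟨a, by simp [Matrix.one_apply], ?_⟩
      intro j hj
      by_contra hne
      simp [Matrix.one_apply, Ne.symm hne] at hj
    · intro i
      refine ⟨i, by simp [Matrix.one_apply], ?_⟩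
      intro j hj
      by_contra hne
      simp [Matrix.one_apply, hne] at hj
  have honeval : ∑ a, ∑ i, lam a * ((1 : Matrix (Fin d) (Fin d) ℝ) a i) ^ 3 = ∑ a, lam a :=
    perm_obj lam honeperm
  constructor
  · constructor
    · intro hmax
      have h1 : ∑ a, lam a ≤ ∑ a, ∑ i, lam a * (U a i) ^ 3 := by
        have := hmax 1 hone
        rwa [honeval] at this
      have h2 := obj_le lam hlam hU.2
      exact eq_imp_perm lam hlam hU (le_antisymm h2 h1)
    · intro hperm W hW
      rw [perm_obj lam hperm]
      exact obj_le lam hlam hW.2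
  · constructor
    · exact ⟨1, hone, honeval.symm⟩
    · rintro x ⟨W, hW, rfl⟩
      exact obj_le lam hlam hW.2
end
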